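/- A torsion free virtually cyclic group is either trivial or infinite cyclic. -/

import Mathlib

/-- The removed Mathlib definition `Monoid.IsTorsionFree`, with its old meaning. -/
def Monoid.IsTorsionFree (G : Type*) [Monoid G] : Prop :=
  ∀ g : G, g ≠ 1 → ¬IsOfFinOrder g

/-!
The normal core `N` of the cyclic subgroup is cyclic, normal and of finite index. A generator `a`
of `N` is central: conjugation by `t` maps `a` to some `a ^ k`, and a positive power of `t` lies
in `⟨a⟩` and is fixed by this conjugation, which by torsion-freeness forces `k = 1`. With `N`
central, the transfer `G →* N` is `g ↦ g ^ N.index`, injective by torsion-freeness, so `G` is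
cyclic; a cyclic torsion-free group is trivial or infinite.
-/

open Subgroup

namespace Monoid.IsTorsionFree

variable {G : Type*} [Group G]

theorem eq_one_of_pow_eq_one (htf : Monoid.IsTorsionFree G) {g : G} {n : ℕ} (hn : 0 < n)
    (hgn : g ^ n = 1) : g = 1 := by
  by_contra hg
  exact htf g hg (isOfFinOrder_iff_pow_eq_one.mpr ⟨n, hn, hgn⟩)

theorem subsingleton [Finite G] (htf : Monoid.IsTorsionFree G) : Subsingleton G :=
  ⟨fun x y => by rw [htf.eq_one_of_pow_eq_one (orderOf_pos x) (pow_orderOf_eq_one x),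
    htf.eq_one_of_pow_eq_one (orderOf_pos y) (pow_orderOf_eq_one y)]⟩

theorem zpow_injective (htf : Monoid.IsTorsionFree G) {a : G} (ha : a ≠ 1) :
    Function.Injective fun k : ℤ => a ^ k :=
  injective_zpow_iff_not_isOfFinOrder.mpr (htf a ha)

theorem commute_of_pow_mem_zpowers (htf : Monoid.IsTorsionFree G) {a t : G}
    (hconj : t * a * t⁻¹ ∈ zpowers a) {m : ℕ} (hm : 0 < m) (htm : t ^ m ∈ zpowers a) :
    Commute t a := by
  obtain ⟨k, hk⟩ := mem_zpowers_iff.mp hconj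
  obtain ⟨j, hj⟩ := mem_zpowers_iff.mp htm
  rcases eq_or_ne a 1 with rfl | ha
  · exact Commute.one_right t
  rcases eq_or_ne j 0 with rfl | hj0
  · rw [zpow_zero, eq_comm] at hj
    rw [htf.eq_one_of_pow_eq_one hm hj]
    exact Commute.one_left a
  have hfix : a ^ (k * j) = a ^ j := by
    rw [zpow_mul, hk, conj_zpow, hj, (Commute.self_pow t m).eq, mul_inv_cancel_right]
  have hk1 : k = 1 := by
    simpa [hj0] using htf.zpow_injective ha hfix
  rw [hk1, zpow_one, eq_comm, mul_inv_eq_iff_eq_mul] at hk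
  exact hk

theorem normal_le_center (htf : Monoid.IsTorsionFree G) (N : Subgroup G) [N.Normal]
    [IsCyclic N] [N.FiniteIndex] : N ≤ center G := by
  obtain ⟨a, rfl⟩ := N.isCyclic_iff_exists_zpowers_eq_top.mp ‹_›
  have hcomm (t : G) : Commute t a := by
    obtain ⟨m, hm, -, htm⟩ :=
      exists_pow_mem_of_index_ne_zero (H := zpowers a) FiniteIndex.index_ne_zero t
    exact htf.commute_of_pow_mem_zpowers (Normal.conj_mem ‹_› a (mem_zpowers a) t) hm htm
  rw [zpowers_le]
  exact mem_center_iff.mpr fun t => (hcomm t).eq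

theorem isCyclic_of_le_center (htf : Monoid.IsTorsionFree G) (N : Subgroup G) [IsCyclic N]
    [N.FiniteIndex] (hN : N ≤ center G) : IsCyclic G := by
  let := IsCyclic.commGroup (α := N)
  have hconj (k : ℕ) (g₀ g : G) (hk : g₀⁻¹ * g ^ k * g₀ ∈ N) : g₀⁻¹ * g ^ k * g₀ = g ^ k := by
    refine mul_right_cancel ((mem_center_iff.mp (hN hk) g₀).symm.trans ?_)
    group
  refine isCyclic_of_injective (MonoidHom.transfer (MonoidHom.id N))
    ((injective_iff_map_eq_one _).mpr fun g hg => ?_)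
  rw [MonoidHom.transfer_eq_pow _ g fun k g₀ => hconj k g₀ g] at hg
  exact htf.eq_one_of_pow_eq_one (Nat.pos_of_ne_zero FiniteIndex.index_ne_zero)
    (congrArg Subtype.val hg)

end Monoid.IsTorsionFree

/-- A torsion free virtually cyclic group is either trivial or infinite cyclic. -/
theorem torsionfree_virtually_cyclic (G : Type*) [Group G]
    (hvc : ∃ H : Subgroup G, IsCyclic H ∧ H.FiniteIndex)
    (htf : Monoid.IsTorsionFree G) :
    Subsingleton G ∨ Nonempty (G ≃* Multiplicative ℤ) := by
  obtain ⟨H, _, _⟩ := hvc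
  have : IsCyclic H.normalCore := isCyclic_of_le H.normalCore_le
  have : IsCyclic G := htf.isCyclic_of_le_center _ (htf.normal_le_center H.normalCore)
  rcases finite_or_infinite G with _ | _
  · exact Or.inl htf.subsingleton
  · exact Or.inr ⟨intCyclicMulEquiv.symm⟩
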